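/- arXiv:1102.1440 — 2 statements merged into one kernel-verified Lean document; each statement's English description precedes it below -/
import Mathlib

section
/- Let p ≥ 3 be a prime, G = (V, E) a hypergraph, e ∈ E a hyperedge, and C : V → Z_p a state. Let v1 ≠ v2 be two vertices of e such that (C(v1), C(v2)) ∉ {(0, 0), (p−1, p−1)}. Then the state D defined by D(v1) = C(v1), D(v2) = C(v2), D(u) = C(u) + 1 for every u ∈ e with u ∉ {v1, v2}, and D(u) = C(u) for u ∉ e, is reachable from C by the Z_p-annihilating walk using only moves on the hyperedge e. -/
/-!
A move at `a ∈ e` followed by a move at `b ∈ e` leaves the values at `a` and `b` unchanged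
and adds `2` at every other vertex of `e`. It is legal as long as `w a ≠ 0` and `w b ≠ -1`,
and these conditions survive the double move, so it can be repeated `(p + 1) / 2` times,
adding `p + 1 = 1` at the other vertices. The hypothesis on `(C v1, C v2)` is exactly what
makes one of the orders `(v1, v2)` or `(v2, v1)` admissible.
-/

/-- A single move of the `ZMod p`-annihilating walk made at some vertex of the
hyperedge `e`, on the hyperedge `e`. -/
def AnnMoveOn {V : Type*} [DecidableEq V] {p : ℕ} (e : Finset V)
    (w w' : V → ZMod p) : Prop :=
  ∃ v ∈ e, w v ≠ 0 ∧
    ∀ u, w' u = if u = v then w u - 1 else if u ∈ e then w u + 1 else w u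

/-- `w2` is reachable from `w1` using only moves on the hyperedge `e`. -/
def AnnReachableOn {V : Type*} [DecidableEq V] {p : ℕ} (e : Finset V)
    (w1 w2 : V → ZMod p) : Prop :=
  Relation.ReflTransGen (AnnMoveOn e) w1 w2

theorem Relation.ReflTransGen.add_nsmul {M : Type*} [AddMonoid M] {r : M → M → Prop}
    {P : M → Prop} {d : M} (hstep : ∀ w, P w → Relation.ReflTransGen r w (w + d))
    (hP : ∀ w, P w → P (w + d))
    {w : M} (hw : P w) (k : ℕ) : Relation.ReflTransGen r w (w + k • d) := by
  have hPk : ∀ k : ℕ, P (w + k • d) := fun k => by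
    induction k with
    | zero => simpa using hw
    | succ k ih => simpa [succ_nsmul, add_assoc] using hP _ ih
  induction k with
  | zero => simpa using Relation.ReflTransGen.refl
  | succ k ih => simpa [succ_nsmul, add_assoc] using ih.trans (hstep _ (hPk k))

theorem ne_zero_and_add_one_ne_zero_or_swap {R : Type*} [Ring R] [Nontrivial R] {x y : R}
    (h0 : ¬(x = 0 ∧ y = 0)) (h1 : ¬(x + 1 = 0 ∧ y + 1 = 0)) :
    (x ≠ 0 ∧ y + 1 ≠ 0) ∨ (y ≠ 0 ∧ x + 1 ≠ 0) := by
  by_cases hx : x = 0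
  · exact .inr ⟨fun hy => h0 ⟨hx, hy⟩, by simp [hx]⟩
  by_cases hy : y + 1 = 0
  · exact .inr ⟨fun hy0 => by simp [hy0] at hy, fun hx1 => h1 ⟨hx1, hy⟩⟩
  exact .inl ⟨hx, hy⟩

section AnnihilatingWalk

variable {V : Type*} [DecidableEq V] {p : ℕ} {e : Finset V}

theorem annMoveOn_of_mem {v : V} (hv : v ∈ e) {w : V → ZMod p} (hw : w v ≠ 0) :
    AnnMoveOn e w (w + (↑e : Set V).indicator 1 - Pi.single v 2) := by
  refine ⟨v, hv, hw, fun u => ?_⟩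
  by_cases huv : u = v
  · subst huv
    simp only [Pi.sub_apply, Pi.add_apply, SetLike.mem_coe, hv, Set.indicator_of_mem,
      Pi.one_apply, Pi.single_eq_same, ↓reduceIte]
    ring
  · by_cases hu : u ∈ e <;> simp [huv, hu]

/-- For distinct `a, b ∈ e` this is the indicator of `e \ {a, b}`; in this form a move at `a`
followed by a move at `b` visibly adds twice it. -/
noncomputable def pairComplementIndicator (e : Finset V) (a b : V) : V → ZMod p :=
  (↑e : Set V).indicator 1 - Pi.single a 1 - Pi.single b 1

theorem pairComplementIndicator_comm (a b : V) :
    pairComplementIndicator (p := p) e a b = pairComplementIndicator e b a :=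
  sub_right_comm _ _ _

theorem pairComplementIndicator_left {a b : V} (ha : a ∈ e) (hab : a ≠ b) :
    pairComplementIndicator (p := p) e a b a = 0 := by
  simp [pairComplementIndicator, ha, hab]

theorem pairComplementIndicator_right {a b : V} (hb : b ∈ e) (hab : a ≠ b) :
    pairComplementIndicator (p := p) e a b b = 0 := by
  rw [pairComplementIndicator_comm, pairComplementIndicator_left hb (Ne.symm hab)]

theorem annReachableOn_add_two_nsmul {a b : V} (ha : a ∈ e) (hb : b ∈ e) (hab : a ≠ b)
    {w : V → ZMod p} (hwa : w a ≠ 0) (hwb : w b + 1 ≠ 0) :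
    AnnReachableOn e w (w + 2 • pairComplementIndicator e a b) := by
  have first := annMoveOn_of_mem ha hwa
  have second := annMoveOn_of_mem (w := w + (↑e : Set V).indicator 1 - Pi.single a 2) hb
    (by simpa [hb, Ne.symm hab] using hwb)
  show Relation.ReflTransGen (AnnMoveOn e) w _
  convert Relation.ReflTransGen.single first |>.tail second using 1
  funext u
  simp only [pairComplementIndicator, Pi.add_apply, Pi.sub_apply, Pi.smul_apply]
  by_cases hua : u = a <;> by_cases hub : u = b <;> simp [*] <;> ring

theorem annReachableOn_add_pairComplementIndicator (hp : Odd p) {a b : V} (ha : a ∈ e)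
    (hb : b ∈ e) (hab : a ≠ b) {w : V → ZMod p} (hwa : w a ≠ 0) (hwb : w b + 1 ≠ 0) :
    AnnReachableOn e w (w + pairComplementIndicator e a b) := by
  obtain ⟨k, rfl⟩ := hp
  have hd : (k + 1) • (2 • pairComplementIndicator e a b)
      = pairComplementIndicator (p := 2 * k + 1) e a b := by
    rw [smul_smul, show (k + 1) * 2 = (2 * k + 1) + 1 by ring, succ_nsmul,
      ZModModule.char_nsmul_eq_zero, zero_add]
  rw [← hd]
  refine Relation.ReflTransGen.add_nsmul (P := fun w => w a ≠ 0 ∧ w b + 1 ≠ 0) ?_ ?_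
    ⟨hwa, hwb⟩ _
  · exact fun w hw => annReachableOn_add_two_nsmul ha hb hab hw.1 hw.2
  · intro w hw
    simpa [pairComplementIndicator_left ha hab, pairComplementIndicator_right hb hab] using hw

end AnnihilatingWalk

theorem stmt5_general {p : ℕ} [Fact p.Prime] (hp : 3 ≤ p)
    {V : Type*} [DecidableEq V]
    (e : Finset V)
    (C : V → ZMod p) (v1 v2 : V) (hv1 : v1 ∈ e) (hv2 : v2 ∈ e) (hne : v1 ≠ v2)
    (hgood : ¬ (C v1 = 0 ∧ C v2 = 0) ∧
             ¬ (C v1 = (p : ZMod p) - 1 ∧ C v2 = (p : ZMod p) - 1)) :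
    AnnReachableOn e C
      (fun u => if u = v1 then C v1 else if u = v2 then C v2
        else if u ∈ e then C u + 1 else C u) := by
  have hodd : Odd p := (Fact.out : p.Prime).odd_of_ne_two (by omega)
  have htarget : (fun u => if u = v1 then C v1 else if u = v2 then C v2
      else if u ∈ e then C u + 1 else C u) = C + pairComplementIndicator e v1 v2 := by
    funext u
    by_cases h1 : u = v1 <;> by_cases h2 : u = v2 <;> by_cases hu : u ∈ e <;>
      simp [pairComplementIndicator, Ne.symm hne, *]
  rw [htarget]
  simp only [ZMod.natCast_self, zero_sub, ← add_eq_zero_iff_eq_neg] at hgood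
  rcases ne_zero_and_add_one_ne_zero_or_swap hgood.1 hgood.2 with ⟨h1, h2⟩ | ⟨h2, h1⟩
  · exact annReachableOn_add_pairComplementIndicator hodd hv1 hv2 hne h1 h2
  · rw [pairComplementIndicator_comm]
    exact annReachableOn_add_pairComplementIndicator hodd hv2 hv1 (Ne.symm hne) h2 h1

/-- if `v1 ≠ v2` lie in the hyperedge `e` and `(C v1, C v2)` is neither
`(0,0)` nor `(p-1,p-1)`, then the state obtained from `C` by increasing by one the value
at every vertex of `e` other than `v1, v2` (and keeping everything else fixed) is
reachable from `C` using only moves on `e`. -/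
theorem stmt5 {p : ℕ} [Fact p.Prime] (hp : 3 ≤ p)
    {V : Type*} [DecidableEq V]
    (E : Finset (Finset V)) (e : Finset V) (he : e ∈ E)
    (C : V → ZMod p) (v1 v2 : V) (hv1 : v1 ∈ e) (hv2 : v2 ∈ e) (hne : v1 ≠ v2)
    (hgood : ¬ (C v1 = 0 ∧ C v2 = 0) ∧
             ¬ (C v1 = (p : ZMod p) - 1 ∧ C v2 = (p : ZMod p) - 1)) :
    AnnReachableOn e C
      (fun u => if u = v1 then C v1 else if u = v2 then C v2
        else if u ∈ e then C u + 1 else C u) :=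
  stmt5_general hp e C v1 v2 hv1 hv2 hne hgood
end

section
/- Let p ≥ 3 be a prime, G = (V, E) a hypergraph, e ∈ E a hyperedge, and C : V → Z_p a state. Let v1 ≠ v2 be two vertices of e such that (C(v1), C(v2)) ∉ {(0, 0), (p−1, p−1)}. Then the state D defined by D(v1) = C(v1), D(v2) = C(v2), D(u) = C(u) − 1 for every u ∈ e with u ∉ {v1, v2}, and D(u) = C(u) for u ∉ e, is reachable from C by the Z_p-annihilating walk using only moves on the hyperedge e. -/
section
variable {V : Type*} [DecidableEq V] {p : ℕ} {e : Finset V}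

def addOffPair (e : Finset V) (a b : V) (c : ZMod p) (w : V → ZMod p) : V → ZMod p :=
  fun u => if u = a ∨ u = b then w u else if u ∈ e then w u + c else w u

lemma AnnReachableOn.trans {w₁ w₂ w₃ : V → ZMod p} (h₁₂ : AnnReachableOn e w₁ w₂)
    (h₂₃ : AnnReachableOn e w₂ w₃) : AnnReachableOn e w₁ w₃ :=
  Relation.ReflTransGen.trans h₁₂ h₂₃

lemma annMoveOn_of_ne_zero {v : V} (hv : v ∈ e) {w : V → ZMod p} (hw : w v ≠ 0) :
    AnnMoveOn e w (fun u => if u = v then w u - 1 else if u ∈ e then w u + 1 else w u) :=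
  ⟨v, hv, hw, fun _ => rfl⟩

lemma addOffPair_apply_left (a b : V) (c : ZMod p) (w : V → ZMod p) :
    addOffPair e a b c w a = w a := by
  simp [addOffPair]

lemma addOffPair_apply_right (a b : V) (c : ZMod p) (w : V → ZMod p) :
    addOffPair e a b c w b = w b := by
  simp [addOffPair]

lemma addOffPair_zero (a b : V) (w : V → ZMod p) : addOffPair e a b 0 w = w := by
  funext u
  simp [addOffPair]

lemma addOffPair_addOffPair (a b : V) (c d : ZMod p) (w : V → ZMod p) :
    addOffPair e a b c (addOffPair e a b d w) = addOffPair e a b (d + c) w := by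
  funext u
  unfold addOffPair
  split_ifs <;> ring

lemma addOffPair_comm (a b : V) (c : ZMod p) (w : V → ZMod p) :
    addOffPair e a b c w = addOffPair e b a c w := by
  funext u
  simp only [addOffPair, or_comm]

lemma annReachableOn_addOffPair_two {a b : V} (ha : a ∈ e) (hb : b ∈ e) (hab : a ≠ b)
    {w : V → ZMod p} (hwa : w a ≠ 0) (hwb : w b + 1 ≠ 0) :
    AnnReachableOn e w (addOffPair e a b 2 w) := by
  have move_a := annMoveOn_of_ne_zero ha hwa
  have move_b := annMoveOn_of_ne_zero hb (w := fun u =>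
    if u = a then w u - 1 else if u ∈ e then w u + 1 else w u) (by simpa [hab.symm, hb])
  unfold AnnReachableOn
  convert (Relation.ReflTransGen.single move_a).tail move_b using 1
  funext u
  by_cases hua : u = a
  · subst hua; simp [addOffPair, hab, ha]
  by_cases hub : u = b
  · subst hub; simp [addOffPair, hab.symm, hb]
  by_cases hue : u ∈ e
  · simp only [addOffPair, hua, hub, or_self, ↓reduceIte, hue]
    ring
  · simp [addOffPair, hua, hub, hue]

lemma annReachableOn_addOffPair_two_mul {a b : V} (ha : a ∈ e) (hb : b ∈ e) (hab : a ≠ b)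
    {w : V → ZMod p} (hwa : w a ≠ 0) (hwb : w b + 1 ≠ 0) (n : ℕ) :
    AnnReachableOn e w (addOffPair e a b (2 * (n : ZMod p)) w) := by
  induction n with
  | zero =>
    rw [Nat.cast_zero, mul_zero, addOffPair_zero]
    exact Relation.ReflTransGen.refl
  | succ n ih =>
    have step := annReachableOn_addOffPair_two ha hb hab
      (w := addOffPair e a b (2 * (n : ZMod p)) w)
      (by rwa [addOffPair_apply_left]) (by rwa [addOffPair_apply_right])
    rw [addOffPair_addOffPair] at step
    convert ih.trans step using 2
    push_cast; ring

end

lemma ZMod.exists_two_mul_eq_neg_one {p : ℕ} (hp : Odd p) : ∃ n : ℕ, (2 * n : ZMod p) = -1 := by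
  obtain ⟨k, rfl⟩ := hp
  refine ⟨k, eq_neg_of_add_eq_zero_left ?_⟩
  exact_mod_cast ZMod.natCast_self (2 * k + 1)

lemma ne_zero_and_add_one_ne_zero_or {R : Type*} [Ring R] [Nontrivial R] {x y : R}
    (h₀ : ¬ (x = 0 ∧ y = 0)) (h₁ : ¬ (x = -1 ∧ y = -1)) :
    (x ≠ 0 ∧ y + 1 ≠ 0) ∨ (y ≠ 0 ∧ x + 1 ≠ 0) := by
  simp only [ne_eq, add_eq_zero_iff_eq_neg]
  by_cases hx : x = 0
  · simp_all
  · by_cases hy : y = -1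
    · exact Or.inr ⟨hy ▸ neg_ne_zero.mpr one_ne_zero, fun hx' => h₁ ⟨hx', hy⟩⟩
    · exact Or.inl ⟨hx, hy⟩

theorem stmt6_general {p : ℕ} [Fact p.Prime] (hp : 3 ≤ p)
    {V : Type*} [DecidableEq V]
    (e : Finset V)
    (C : V → ZMod p) (v1 v2 : V) (hv1 : v1 ∈ e) (hv2 : v2 ∈ e) (hne : v1 ≠ v2)
    (hgood : ¬ (C v1 = 0 ∧ C v2 = 0) ∧
             ¬ (C v1 = (p : ZMod p) - 1 ∧ C v2 = (p : ZMod p) - 1)) :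
    AnnReachableOn e C
      (fun u => if u = v1 then C v1 else if u = v2 then C v2
        else if u ∈ e then C u - 1 else C u) := by
  have hpodd : Odd p := (Fact.out : p.Prime).odd_of_ne_two (by omega)
  obtain ⟨n, hn⟩ := ZMod.exists_two_mul_eq_neg_one hpodd
  have htarget : (fun u => if u = v1 then C v1 else if u = v2 then C v2
      else if u ∈ e then C u - 1 else C u) = addOffPair e v1 v2 (2 * (n : ZMod p)) C := by
    funext u
    rw [hn]
    unfold addOffPair
    split_ifs <;> simp_all [sub_eq_add_neg]
  rw [htarget]
  simp only [ZMod.natCast_self, zero_sub] at hgood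
  rcases ne_zero_and_add_one_ne_zero_or hgood.1 hgood.2 with ⟨h1, h2⟩ | ⟨h2, h1⟩
  · exact annReachableOn_addOffPair_two_mul hv1 hv2 hne h1 h2 n
  · rw [addOffPair_comm]
    exact annReachableOn_addOffPair_two_mul hv2 hv1 hne.symm h2 h1 n

/-- if `v1 ≠ v2` lie in the hyperedge `e` and `(C v1, C v2)` is neither
`(0,0)` nor `(p-1,p-1)`, then the state obtained from `C` by decreasing by one the value
at every vertex of `e` other than `v1, v2` (and keeping everything else fixed) is
reachable from `C` using only moves on `e`. -/
theorem stmt6 {p : ℕ} [Fact p.Prime] (hp : 3 ≤ p)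
    {V : Type*} [DecidableEq V]
    (E : Finset (Finset V)) (e : Finset V) (he : e ∈ E)
    (C : V → ZMod p) (v1 v2 : V) (hv1 : v1 ∈ e) (hv2 : v2 ∈ e) (hne : v1 ≠ v2)
    (hgood : ¬ (C v1 = 0 ∧ C v2 = 0) ∧
             ¬ (C v1 = (p : ZMod p) - 1 ∧ C v2 = (p : ZMod p) - 1)) :
    AnnReachableOn e C
      (fun u => if u = v1 then C v1 else if u = v2 then C v2
        else if u ∈ e then C u - 1 else C u) :=
  stmt6_general hp e C v1 v2 hv1 hv2 hne hgood
end
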